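/- arXiv:1710.02802 — 7 statements merged into one kernel-verified Lean document; each statement's English description precedes it below -/
import Mathlib

section
/- Let K be a field of characteristic zero, r ≥ 2, and suppose Q = Q_r y^r + Q_{r-1}(x) y^{r-1} + ... + Q_0(x) ∈ K[x,y] with Q_r ∈ K nonzero satisfies Q + c = ((1/r) y + Q_{r-1}(x)/(r^2 Q_r)) · Q_y for some c ∈ K. Then for every i with 1 ≤ i ≤ r−2 one has Q_i(x) = C(r,i) · Q_{r-1}(x)^{r−i} / (r^{r−i} Q_r^{r−i−1}), where C(r,i) is the binomial coefficient. -/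
open Polynomial

/-!
Comparing coefficients of `y^(m+1)` in `Q + c = (y/r + u) Q_y` gives the two-term recursion
`(r - m - 1) Q_{m+1} = (m + 2) r u Q_{m+2}`, which determines `Q_{r-2}, …, Q_1` from `Q_{r-1}`
one step at a time. With `u = Q_{r-1}/(r² Q_r)` the closed form follows by downward induction,
the binomial coefficients entering through `(k + 1) C(r, k+1) = (r - k) C(r, k)`.
-/

theorem sub_smul_coeff_succ_eq_of_add_C_eq_mul_derivative {K A : Type*} [Field K]
    [CommRing A] [Algebra K A] {Q : A[X]} {r : K} (hr : r ≠ 0) {d u : A}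
    (heq : Q + C d = (C (algebraMap K A r⁻¹) * X + C u) * derivative Q) (m : ℕ) :
    (r - (m + 1)) • Q.coeff (m + 1) = ((m + 2) * r) • (u * Q.coeff (m + 2)) := by
  have h := congrArg (coeff · (m + 1)) heq
  simp only [coeff_add, coeff_C_succ, add_zero, add_mul, mul_assoc, coeff_C_mul, coeff_X_mul,
    coeff_derivative] at h
  have hinv : algebraMap K A r * algebraMap K A r⁻¹ = 1 := by
    rw [← map_mul, mul_inv_cancel₀ hr, map_one]
  push_cast at h
  simp only [Algebra.smul_def, map_sub, map_mul, map_add, map_natCast, map_ofNat, map_one]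
  linear_combination algebraMap K A r * h + ((m : A) + 1) * Q.coeff (m + 1) * hinv

theorem apply_sub_eq_choose_smul_pow_of_recursion {K A : Type*} [Field K] [CharZero K]
    [CommRing A] [Algebra K A] {q : ℕ → A} {r : ℕ} {s : K}
    (hrec : ∀ m : ℕ, ((r : K) - (m + 1)) • q (m + 1) = ((m + 2) * s) • (q (r - 1) * q (m + 2)))
    {k : ℕ} (hk : 1 ≤ k) (hkr : k < r) :
    q (r - k) = ((r.choose k : K) * (r : K)⁻¹ * s ^ (k - 1)) • q (r - 1) ^ k := by
  induction k, hk using Nat.le_induction with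
  | base =>
    have hr : (r : K) ≠ 0 := Nat.cast_ne_zero.mpr (by omega)
    rw [Nat.choose_one_right, mul_inv_cancel₀ hr, pow_zero, one_mul, one_smul, pow_one]
  | succ k hk ih =>
    obtain ⟨m, rfl⟩ : ∃ m, r = m + k + 2 := ⟨r - k - 2, by omega⟩
    have hbinom : ((m + k + 2).choose (k + 1) : K) * (k + 1) = (m + k + 2).choose k * (m + 2) := by
      have := Nat.choose_succ_right_eq (m + k + 2) k
      rw [show m + k + 2 - k = m + 2 by omega] at this
      exact_mod_cast this
    have hpow : s ^ (k + 1 - 1) = s * s ^ (k - 1) := by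
      rw [Nat.add_sub_cancel, ← pow_succ', Nat.sub_add_cancel hk]
    have hstep := hrec m
    rw [show m + 2 = m + k + 2 - k by omega, ih (by omega), mul_smul_comm, smul_smul,
      ← pow_succ', show ((m + k + 2 : ℕ) : K) - (m + 1) = k + 1 by push_cast; ring] at hstep
    rw [show m + k + 2 - (k + 1) = m + 1 by omega]
    refine smul_right_injective A (Nat.cast_add_one_ne_zero k : (k : K) + 1 ≠ 0) ?_
    simp only [smul_smul, hstep, hpow]
    congr 1
    push_cast at hbinom ⊢
    linear_combination -((m : K) + k + 2)⁻¹ * s * s ^ (k - 1) * hbinom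

theorem stmt_2_general (K : Type*) [Field K] [CharZero K]
    (Q : Polynomial (Polynomial K)) (r : ℕ) (qr : K) (c : K)
    (heq : Q + Polynomial.C (Polynomial.C c) =
      (Polynomial.C (Polynomial.C (r : K)⁻¹) * Polynomial.X +
        Polynomial.C ((((r : K) ^ 2) * qr)⁻¹ • Q.coeff (r - 1))) * Polynomial.derivative Q) :
    ∀ i : ℕ, 1 ≤ i → i ≤ r - 2 →
      Q.coeff i = ((r.choose i : K) * ((r : K) ^ (r - i) * qr ^ (r - i - 1))⁻¹) •
        (Q.coeff (r - 1)) ^ (r - i) := by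
  intro i hi hir
  have hr : (r : K) ≠ 0 := Nat.cast_ne_zero.mpr (by omega)
  have hrec (m : ℕ) : ((r : K) - (m + 1)) • Q.coeff (m + 1) =
      ((m + 2) * (r * qr)⁻¹) • (Q.coeff (r - 1) * Q.coeff (m + 2)) := by
    rw [sub_smul_coeff_succ_eq_of_add_C_eq_mul_derivative hr heq, smul_mul_assoc, smul_smul,
      mul_assoc, pow_two, mul_assoc, mul_inv, mul_inv_cancel_left₀ hr]
  have hclosed := apply_sub_eq_choose_smul_pow_of_recursion hrec (k := r - i) (by omega) (by omega)
  rw [Nat.sub_sub_self (by omega : i ≤ r)] at hclosed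
  obtain ⟨n, hn⟩ : ∃ n, r - i = n + 1 := ⟨r - i - 1, by omega⟩
  rw [hclosed, Nat.choose_symm (by omega), hn, Nat.add_sub_cancel, mul_inv, mul_pow, inv_pow,
    inv_pow, pow_succ' (r : K), mul_inv]
  congr 1
  ring

/-- If `Q ∈ K[x][y]` has degree `r ≥ 2` in `y` with constant nonzero leading
coefficient `qr` and `Q + c = ((1/r)·y + Q_{r-1}(x)/(r²·qr)) · Q_y`, then for `1 ≤ i ≤ r−2`,
`Q_i(x) = C(r,i) · Q_{r-1}(x)^{r−i} / (r^{r−i} · qr^{r−i−1})`. -/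
theorem stmt_2 (K : Type*) [Field K] [CharZero K]
    (Q : Polynomial (Polynomial K)) (r : ℕ) (qr : K) (c : K)
    (hr : 2 ≤ r) (hdeg : Q.natDegree = r) (hqr : qr ≠ 0)
    (hlead : Q.leadingCoeff = Polynomial.C qr)
    (heq : Q + Polynomial.C (Polynomial.C c) =
      (Polynomial.C (Polynomial.C (r : K)⁻¹) * Polynomial.X +
        Polynomial.C ((((r : K) ^ 2) * qr)⁻¹ • Q.coeff (r - 1))) * Polynomial.derivative Q) :
    ∀ i : ℕ, 1 ≤ i → i ≤ r - 2 →
      Q.coeff i = ((r.choose i : K) * ((r : K) ^ (r - i) * qr ^ (r - i - 1))⁻¹) •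
        (Q.coeff (r - 1)) ^ (r - i) :=
  stmt_2_general K Q r qr c heq
end

section
/- Let K be a field of characteristic zero, f ∈ K[x,y] irreducible with f_y ≠ 0, q ∈ K[x,y], s ≥ 1, and c ∈ K. Suppose q_y = f^s and f divides q + c in K[x,y]. Then f^{s+1} divides q + c. -/
/-!
Write `q + c = f^(k+1) g` with `k < s`. Differentiating in `y` gives
`f^s = f^k ((k+1) f_y g + f g_y)`, so `f` divides `(k+1) f_y g`. As `k+1` is a unit and `f` cannot
divide `f_y` (which has smaller total degree and is nonzero), the prime `f` divides `g`. Induction on `k`,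
starting from `f ∣ q + c`, gives `f^(s+1) ∣ q + c`.
-/

open MvPolynomial

namespace MvPolynomial

variable {σ R : Type*} [CommSemiring R] {i : σ} {p : MvPolynomial σ R}

theorem totalDegree_pderiv_lt (h : pderiv i p ≠ 0) :
    (pderiv i p).totalDegree < p.totalDegree := by
  have hmon : ∀ m ∈ (pderiv i p).support, (m.sum fun _ e => e) < p.totalDegree := by
    intro m hm
    have hm' : m + Finsupp.single i 1 ∈ p.support := by
      rw [mem_support_iff, coeff_pderiv] at hm
      exact mem_support_iff.mpr (left_ne_zero_of_mul hm)
    have := le_totalDegree hm'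
    rw [Finsupp.sum_add_index' (fun _ => rfl) (fun _ _ _ => rfl), Finsupp.sum_single_index rfl]
      at this
    omega
  obtain ⟨m, hm⟩ := support_nonempty.mpr h
  exact (Finset.sup_lt_iff (bot_le.trans_lt (hmon m hm))).mpr hmon

theorem not_dvd_pderiv_self [IsDomain R] (h : pderiv i p ≠ 0) : ¬ p ∣ pderiv i p :=
  fun hdvd => (totalDegree_le_of_dvd_of_isDomain hdvd h).not_gt (totalDegree_pderiv_lt h)

end MvPolynomial

namespace Derivation

variable {R A : Type*} [CommRing R] [CommRing A] [IsDomain A] [Algebra R A] [Algebra ℚ A]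
  (D : Derivation R A A) {f a : A} {s : ℕ}

theorem pow_add_two_dvd_of_eq_pow {k : ℕ} (hf : Prime f) (hDf : ¬ f ∣ D f) (hk : k < s)
    (hDa : D a = f ^ s) (ha : f ^ (k + 1) ∣ a) : f ^ (k + 2) ∣ a := by
  obtain ⟨g, rfl⟩ := ha
  have hD : f ^ k * ((k + 1 : A) * (D f * g) + f * D g) = f ^ k * f ^ (s - k) := by
    rw [← pow_add, Nat.add_sub_cancel' hk.le, ← hDa, leibniz, leibniz_pow]
    simp only [smul_eq_mul, nsmul_eq_mul, Nat.add_sub_cancel]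
    push_cast
    ring
  have hfg : f ∣ (k + 1 : A) * (D f * g) := by
    refine (dvd_add_left (dvd_mul_right f (D g))).mp ?_
    rw [mul_left_cancel₀ (pow_ne_zero k hf.ne_zero) hD]
    exact dvd_pow_self f (by omega)
  have hunit : IsUnit (k + 1 : A) := by
    simpa using (Nat.cast_add_one_ne_zero (R := ℚ) k).isUnit.map (algebraMap ℚ A)
  rcases hf.dvd_or_dvd ((hunit.dvd_mul_left).mp hfg) with hfDf | hfg
  · exact absurd hfDf hDf
  · rw [pow_succ]
    exact mul_dvd_mul_left _ hfg

theorem pow_succ_dvd_of_eq_pow (hf : Prime f) (hDf : ¬ f ∣ D f) (hDa : D a = f ^ s)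
    (ha : f ∣ a) : f ^ (s + 1) ∣ a := by
  suffices ∀ k ≤ s, f ^ (k + 1) ∣ a from this s le_rfl
  intro k
  induction k with
  | zero => exact fun _ => by simpa using ha
  | succ k ih => exact fun hk => D.pow_add_two_dvd_of_eq_pow hf hDf hk hDa (ih (by omega))

end Derivation

theorem stmt_4_general (K : Type*) [Field K] [CharZero K]
    (f q : MvPolynomial (Fin 2) K) (s : ℕ) (c : K)
    (hf : Irreducible f) (hfy : pderiv (1 : Fin 2) f ≠ 0)
    (hqy : pderiv (1 : Fin 2) q = f ^ s)
    (hdvd : f ∣ q + MvPolynomial.C c) :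
    f ^ (s + 1) ∣ q + MvPolynomial.C c :=
  (pderiv 1).pow_succ_dvd_of_eq_pow hf.prime (not_dvd_pderiv_self hfy)
    (by rw [map_add, pderiv_C, add_zero, hqy]) hdvd

/-- If `f ∈ K[x,y]` is irreducible with `f_y ≠ 0`, `q_y = f^s` (with `s ≥ 1`),
and `f ∣ q + c`, then `f^{s+1} ∣ q + c`. -/
theorem stmt_4 (K : Type*) [Field K] [CharZero K]
    (f q : MvPolynomial (Fin 2) K) (s : ℕ) (c : K)
    (hf : Irreducible f) (hfy : pderiv (1 : Fin 2) f ≠ 0) (hs : 1 ≤ s)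
    (hqy : pderiv (1 : Fin 2) q = f ^ s)
    (hdvd : f ∣ q + MvPolynomial.C c) :
    f ^ (s + 1) ∣ q + MvPolynomial.C c :=
  stmt_4_general K f q s c hf hfy hqy hdvd
end

section
/- Let K be a field of characteristic zero, f ∈ K[x,y] irreducible with f_y ≠ 0, q ∈ K[x,y], and s ≥ 1. If q_y = f^s and f divides q_x in K[x,y], then f^s divides q_x. -/
/-!
Since derivations commute, `∂_y q_x = ∂_x (f ^ s) = s f ^ (s - 1) f_x` is divisible by `f ^ (s - 1)`.
For a prime `f` with `f ∤ f_y` (a degree argument in `y`), `f ^ k ∣ p` and `f ^ k ∣ ∂_y p` give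
`f ^ (k + 1) ∣ p` as long as `f ∤ k`, so `f ∣ q_x` lifts one power at a time up to `f ^ s ∣ q_x`.
-/

open MvPolynomial

section Derivation

variable {A R : Type*} [CommSemiring A] [CommRing R] [IsDomain R] [Algebra A R]
  (D : Derivation A R R) {f p : R}

/-- Writing `p = f ^ k * g`, `D p = f ^ k * D g + k * f ^ (k - 1) * D f * g`, so `f ^ k ∣ D p`
forces `f ∣ k * D f * g`, hence `f ∣ g`. -/
theorem pow_succ_dvd_of_pow_dvd_of_pow_dvd_derivation (hf : Prime f) (hDf : ¬ f ∣ D f) {k : ℕ}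
    (hk : ¬ f ∣ (k : R)) (hp : f ^ k ∣ p) (hDp : f ^ k ∣ D p) : f ^ (k + 1) ∣ p := by
  obtain ⟨g, rfl⟩ := hp
  obtain ⟨n, rfl⟩ : ∃ n, k = n + 1 :=
    Nat.exists_eq_succ_of_ne_zero fun hk0 => hk (by simp [hk0])
  have hDp' : D (f ^ (n + 1) * g) = f ^ (n + 1) * D g + f ^ n * (g * (n + 1 : ℕ) * D f) := by
    rw [Derivation.leibniz, Derivation.leibniz_pow, smul_eq_mul, smul_eq_mul, nsmul_eq_mul,
      smul_eq_mul, Nat.add_sub_cancel]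
    ring
  have hrest : f ^ n * f ∣ f ^ n * (g * (n + 1 : ℕ) * D f) := by
    rw [← pow_succ]
    exact (dvd_add_right (dvd_mul_right _ _)).mp (hDp'.symm ▸ hDp)
  have hg : f ∣ g := by
    rcases hf.dvd_or_dvd ((mul_dvd_mul_iff_left (pow_ne_zero n hf.ne_zero)).mp hrest) with h | h
    · exact (hf.dvd_or_dvd h).resolve_right hk
    · exact absurd h hDf
  rw [pow_succ]
  exact mul_dvd_mul_left _ hg

theorem pow_succ_dvd_of_dvd_of_pow_dvd_derivation (hf : Prime f) (hDf : ¬ f ∣ D f)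
    (hchar : ∀ k : ℕ, k ≠ 0 → ¬ f ∣ (k : R)) (hp : f ∣ p) {n : ℕ} (hDp : f ^ n ∣ D p) :
    f ^ (n + 1) ∣ p := by
  induction n with
  | zero => simpa using hp
  | succ n ih =>
    exact pow_succ_dvd_of_pow_dvd_of_pow_dvd_derivation D hf hDf (hchar _ n.succ_ne_zero)
      (ih ((pow_dvd_pow f n.le_succ).trans hDp)) hDp

end Derivation

namespace MvPolynomial

theorem pderiv_pderiv_comm {R σ : Type*} [CommSemiring R] (i j : σ) (p : MvPolynomial σ R) :
    pderiv i (pderiv j p) = pderiv j (pderiv i p) := by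
  classical
  have hX : ∀ a b k : σ, pderiv a (pderiv b (X k : MvPolynomial σ R)) = 0 := by
    intro a b k
    rw [pderiv_X, Pi.single_apply]
    split_ifs <;> simp
  induction p using MvPolynomial.induction_on with
  | C a => simp
  | add p q hp hq => simp only [map_add, hp, hq]
  | mul_X p k ih =>
    simp only [pderiv_mul, map_add, hX, mul_zero, add_zero, ih]
    ring

theorem dvd_pderiv_one_iff {R : Type*} [CommRing R] [IsDomain R] (f : MvPolynomial (Fin 2) R) :
    f ∣ pderiv 1 f ↔ pderiv 1 f = 0 := by
  obtain ⟨p, rfl⟩ := (Polynomial.Bivariate.equivMvPolynomial R).surjective f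
  rw [Polynomial.Bivariate.pderiv_one_equivMvPolynomial, map_dvd_iff,
    EmbeddingLike.map_eq_zero_iff, Polynomial.dvd_derivative_iff]

end MvPolynomial

theorem stmt_5_general (K : Type*) [Field K] [CharZero K]
    (f q : MvPolynomial (Fin 2) K) (s : ℕ)
    (hf : Irreducible f) (hfy : pderiv (1 : Fin 2) f ≠ 0)
    (hqy : pderiv (1 : Fin 2) q = f ^ s)
    (hdvd : f ∣ pderiv (0 : Fin 2) q) :
    f ^ s ∣ pderiv (0 : Fin 2) q := by
  obtain _ | n := s
  · exact one_dvd _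
  have hchar (k : ℕ) (hk : k ≠ 0) : ¬ f ∣ (k : MvPolynomial (Fin 2) K) := fun h =>
    hf.not_isUnit <| isUnit_of_dvd_unit h <| by
      simpa using (isUnit_iff_ne_zero.mpr (Nat.cast_ne_zero.mpr hk : (k : K) ≠ 0)).map C
  have hmixed : pderiv 1 (pderiv 0 q) =
      ((n + 1 : ℕ) : MvPolynomial (Fin 2) K) * f ^ n * pderiv 0 f := by
    rw [pderiv_pderiv_comm, hqy, pderiv_pow, Nat.add_sub_cancel]
  exact pow_succ_dvd_of_dvd_of_pow_dvd_derivation (pderiv 1) hf.prime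
    (mt (dvd_pderiv_one_iff f).mp hfy) hchar hdvd
    (hmixed ▸ dvd_mul_of_dvd_left (dvd_mul_left _ _) _)

/-- If `f ∈ K[x,y]` is irreducible with `f_y ≠ 0`, `q_y = f^s` (with `s ≥ 1`),
and `f ∣ q_x`, then `f^s ∣ q_x`. -/
theorem stmt_5 (K : Type*) [Field K] [CharZero K]
    (f q : MvPolynomial (Fin 2) K) (s : ℕ)
    (hf : Irreducible f) (hfy : pderiv (1 : Fin 2) f ≠ 0) (hs : 1 ≤ s)
    (hqy : pderiv (1 : Fin 2) q = f ^ s)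
    (hdvd : f ∣ pderiv (0 : Fin 2) q) :
    f ^ s ∣ pderiv (0 : Fin 2) q :=
  stmt_5_general K f q s hf hfy hqy hdvd
end

section
/- Let K be a field of characteristic zero, s ≥ 1 an integer, and f, M ∈ K[x,y] with (s+1) f_y M + f M_y = 1. Assume deg_y f = l ≥ 1 and that the coefficient of y^l in f (as a polynomial in y over K[x]) is a nonzero constant of K. Then deg_y f = 1 and M ∈ K[x]; in particular f = f_1 y + f_0(x) with f_1 ∈ K nonzero. -/
open Polynomial

lemma deriv_facts {R : Type*} [CommRing R] [IsDomain R] [CharZero R]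
    (p : R[X]) (n : ℕ) (hn : 1 ≤ n) (hp : p.natDegree = n) :
    (derivative p).natDegree = n - 1 ∧
      (derivative p).leadingCoeff = p.leadingCoeff * (n : R) := by
  have hp0 : p ≠ 0 := by
    intro h; rw [h, natDegree_zero] at hp; omega
  have hc : (derivative p).coeff (n - 1) = p.leadingCoeff * (n : R) := by
    have h1 : n - 1 + 1 = n := by omega
    rw [coeff_derivative, h1]
    congr 1
    · rw [← hp, coeff_natDegree]
    · rw [Nat.cast_sub hn]; push_cast; ring
  have hne : (derivative p).coeff (n - 1) ≠ 0 := by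
    rw [hc]
    exact mul_ne_zero (leadingCoeff_ne_zero.mpr hp0) (Nat.cast_ne_zero.mpr (by omega))
  have hdeg : (derivative p).natDegree = n - 1 :=
    le_antisymm (by simpa [hp] using natDegree_derivative_le p)
      (le_natDegree_of_ne_zero hne)
  exact ⟨hdeg, by rw [← coeff_natDegree (p := derivative p), hdeg, hc]⟩

/-- If `(s+1)·f_y·M + f·M_y = 1` in `K[x][y]` with `s ≥ 1`, `deg_y f = l ≥ 1`
and the leading `y`-coefficient of `f` a nonzero constant, then `deg_y f = 1`, `M ∈ K[x]`,
and `f = f₁·y + f₀(x)` with `f₁ ∈ K` nonzero. -/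
theorem stmt_6 (K : Type*) [Field K] [CharZero K]
    (f M : Polynomial (Polynomial K)) (s l : ℕ) (fl : K)
    (hs : 1 ≤ s) (hl : 1 ≤ l) (hdeg : f.natDegree = l)
    (hfl : fl ≠ 0) (hlead : f.leadingCoeff = Polynomial.C fl)
    (heq : ((s + 1 : ℕ) : Polynomial (Polynomial K)) * Polynomial.derivative f * M
        + f * Polynomial.derivative M = 1) :
    f.natDegree = 1 ∧ M.natDegree = 0 ∧
      ∃ f₁ : K, f₁ ≠ 0 ∧ ∃ f₀ : Polynomial K,
        f = Polynomial.C (Polynomial.C f₁) * Polynomial.X + Polynomial.C f₀ := by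
  classical
  have hC : ((s + 1 : ℕ) : Polynomial (Polynomial K))
      = C ((s + 1 : ℕ) : Polynomial K) := by
    simp
  set a : Polynomial K := ((s + 1 : ℕ) : Polynomial K) with ha
  have ha0 : a ≠ 0 := Nat.cast_ne_zero.mpr (by omega)
  have hf0 : f ≠ 0 := by intro h; rw [h, natDegree_zero] at hdeg; omega
  have hM0 : M ≠ 0 := by intro h; simp [h] at heq
  obtain ⟨hdfdeg, hdflc⟩ := deriv_facts f l hl hdeg
  have hlcdf : (derivative f).leadingCoeff ≠ 0 := by
    rw [hdflc, hlead]
    exact mul_ne_zero (by simpa using hfl) (Nat.cast_ne_zero.mpr (by omega))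
  have hdf0 : derivative f ≠ 0 := leadingCoeff_ne_zero.mp hlcdf
  rw [hC] at heq
  have hkey : l = 1 ∧ M.natDegree = 0 := by
    by_cases hm : M.natDegree = 0
    · obtain ⟨c, hc⟩ := natDegree_eq_zero.mp hm
      have hdM : derivative M = 0 := by rw [← hc, derivative_C]
      rw [hdM, mul_zero, add_zero] at heq
      have hnd := congrArg natDegree heq
      rw [natDegree_mul (mul_ne_zero (C_ne_zero.mpr ha0) hdf0) hM0,
          natDegree_mul (C_ne_zero.mpr ha0) hdf0, natDegree_C, natDegree_one,
          hdfdeg, hm] at hnd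
      exact ⟨by omega, hm⟩
    · exfalso
      have hm1 : 1 ≤ M.natDegree := by omega
      obtain ⟨hdMdeg, hdMlc⟩ := deriv_facts M M.natDegree hm1 rfl
      have hlcM : M.leadingCoeff ≠ 0 := leadingCoeff_ne_zero.mpr hM0
      have hlcdM : (derivative M).leadingCoeff ≠ 0 := by
        rw [hdMlc]; exact mul_ne_zero hlcM (Nat.cast_ne_zero.mpr (by omega))
      have hdM0 : derivative M ≠ 0 := leadingCoeff_ne_zero.mp hlcdM
      set n := l - 1 + M.natDegree with hn
      have hT1deg : (C a * derivative f * M).natDegree = n := by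
        rw [natDegree_mul (mul_ne_zero (C_ne_zero.mpr ha0) hdf0) hM0,
            natDegree_mul (C_ne_zero.mpr ha0) hdf0, natDegree_C, hdfdeg]
        omega
      have hT2deg : (f * derivative M).natDegree = n := by
        rw [natDegree_mul hf0 hdM0, hdeg, hdMdeg]; omega
      have h1 : (C a * derivative f * M).coeff n
          = a * (C fl * (l : Polynomial K)) * M.leadingCoeff := by
        conv_lhs => rw [← hT1deg]
        rw [coeff_natDegree, leadingCoeff_mul, leadingCoeff_mul, leadingCoeff_C,
            hdflc, hlead]
      have h2 : (f * derivative M).coeff n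
          = C fl * (M.leadingCoeff * (M.natDegree : Polynomial K)) := by
        conv_lhs => rw [← hT2deg]
        rw [coeff_natDegree, leadingCoeff_mul, hdMlc, hlead]
      have hcoeff := congrArg (fun p => p.coeff n) heq
      simp only [coeff_add] at hcoeff
      rw [h1, h2, coeff_one, if_neg (by omega : n ≠ 0)] at hcoeff
      have hzero : C fl * M.leadingCoeff
          * (a * (l : Polynomial K) + (M.natDegree : Polynomial K)) = 0 := by
        rw [← hcoeff]; ring
      have hne : (a * (l : Polynomial K) + (M.natDegree : Polynomial K)) ≠ 0 := by
        have hcast : a * (l : Polynomial K) + (M.natDegree : Polynomial K)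
            = (((s + 1) * l + M.natDegree : ℕ) : Polynomial K) := by
          rw [ha]; push_cast; ring
        rw [hcast]
        exact Nat.cast_ne_zero.mpr (by positivity)
      exact mul_ne_zero (mul_ne_zero (C_ne_zero.mpr hfl) hlcM) hne hzero
  obtain ⟨hl1, hm0⟩ := hkey
  rw [hl1] at hdeg
  refine ⟨hdeg, hm0, fl, hfl, f.coeff 0, ?_⟩
  have hrep := f.eq_X_add_C_of_natDegree_le_one (le_of_eq hdeg)
  have hc1 : f.coeff 1 = C fl := by rw [← hdeg, coeff_natDegree, hlead]
  rw [hc1] at hrep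
  exact hrep
end

section
/- Let K be a field of characteristic zero, f ∈ K[x,y], and a ∈ K[x]. If f_x = a'(x) · f_y, then there exists a univariate polynomial g ∈ K[t] such that f(x,y) = g(y + a(x)). -/
/-!
The shear `(x, y) ↦ (x, y - a(x))` turns the equation `f_x = a'(x) f_y` into `h_x = 0` for
`h = f(x, y - a(x))`, by the chain rule. In characteristic zero a polynomial with vanishing
`x`-derivative does not involve `x`, so `h = g(y)` and shearing back gives `f = g(y + a(x))`.
-/

open MvPolynomial

namespace MvPolynomial

variable {R σ τ : Type*}

theorem pderiv_aeval [CommSemiring R] [Fintype σ] (g : σ → MvPolynomial τ R) (i : τ)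
    (p : MvPolynomial σ R) :
    pderiv i (aeval g p) = ∑ j, aeval g (pderiv j p) * pderiv i (g j) := by
  classical
  induction p using MvPolynomial.induction_on with
  | C c => simp only [aeval_C, pderiv_C, map_zero, zero_mul, Finset.sum_const_zero, algebraMap_eq]
  | add p q hp hq => simp only [map_add, hp, hq, add_mul, Finset.sum_add_distrib]
  | mul_X p k hp =>
    simp only [map_mul, aeval_X, pderiv_mul, hp, pderiv_X, map_add, add_mul,
      Finset.sum_add_distrib, Finset.sum_mul, Pi.single_apply]
    simp [mul_right_comm, mul_assoc]

theorem notMem_vars_of_pderiv_eq_zero [CommSemiring R] [IsAddTorsionFree R] {i : σ}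
    {p : MvPolynomial σ R} (h : pderiv i p = 0) : i ∉ p.vars := by
  intro hi
  obtain ⟨d, hd, hid⟩ := (mem_vars_iff_mem_support i).mp hi
  have hle : Finsupp.single i 1 ≤ d :=
    Finsupp.single_le_iff.mpr (Nat.one_le_iff_ne_zero.mpr (Finsupp.mem_support_iff.mp hid))
  have hcoeff := coeff_pderiv (i := i) p (d - Finsupp.single i 1)
  rw [h, coeff_zero, tsub_add_cancel_of_le hle, ← Nat.cast_succ, mul_comm, ← nsmul_eq_mul]
    at hcoeff
  exact mem_support_iff.mp hd ((smul_eq_zero_iff_right (Nat.succ_ne_zero _)).mp hcoeff.symm)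

theorem vars_subset_one_of_pderiv_zero_eq_zero [CommSemiring R] [IsAddTorsionFree R]
    {p : MvPolynomial (Fin 2) R} (h : pderiv 0 p = 0) : p.vars ⊆ {1} := by
  intro j hj
  fin_cases j
  · exact absurd hj (notMem_vars_of_pderiv_eq_zero h)
  · exact Finset.mem_singleton_self 1

theorem exists_eq_aeval_X_of_vars_subset [CommSemiring R] {i : σ} {p : MvPolynomial σ R}
    (h : p.vars ⊆ {i}) : ∃ g : Polynomial R, p = Polynomial.aeval (X i) g := by
  obtain ⟨q, rfl⟩ := p.exists_rename_eq_of_vars_subset_range (fun _ : Unit => i)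
    (fun _ _ _ => rfl) fun j hj => ⟨(), (Finset.mem_singleton.mp (h hj)).symm⟩
  refine ⟨uniqueAlgEquiv R Unit q, ?_⟩
  rw [Polynomial.aeval_def, eval₂_const_uniqueAlgEquiv, rename_eq_aeval, aeval_def]
  rfl

end MvPolynomial

section Shear

variable {R : Type*} [CommSemiring R]

noncomputable def shear (a : Polynomial R) :
    MvPolynomial (Fin 2) R →ₐ[R] MvPolynomial (Fin 2) R :=
  aeval ![X 0, X 1 + Polynomial.aeval (X 0) a]

theorem shear_X_zero (a : Polynomial R) : shear a (X 0) = X 0 := by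
  simp [shear]

theorem shear_X_one (a : Polynomial R) : shear a (X 1) = X 1 + Polynomial.aeval (X 0) a := by
  simp [shear]

theorem shear_aeval_X_zero (a b : Polynomial R) :
    shear a (Polynomial.aeval (X 0) b) = Polynomial.aeval (X 0) b := by
  rw [← Polynomial.aeval_algHom_apply, shear_X_zero]

theorem pderiv_zero_shear (a : Polynomial R) (p : MvPolynomial (Fin 2) R) :
    pderiv 0 (shear a p) = shear a (pderiv 0 p)
      + Polynomial.aeval (X 0) (Polynomial.derivative a) * shear a (pderiv 1 p) := by
  rw [shear, pderiv_aeval, Fin.sum_univ_two]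
  simp only [Matrix.cons_val_zero, Matrix.cons_val_one, map_add, pderiv_X_self,
    pderiv_X_of_ne one_ne_zero, Derivation.map_aeval, smul_eq_mul, mul_one, zero_add]
  ring

theorem shear_shear_neg {R : Type*} [CommRing R] (a : Polynomial R) (p : MvPolynomial (Fin 2) R) :
    shear a (shear (-a) p) = p := by
  suffices (shear a).comp (shear (-a)) = AlgHom.id R _ from congr($this p)
  refine algHom_ext (Fin.forall_fin_two.mpr ⟨?_, ?_⟩)
  · simp only [AlgHom.comp_apply, shear_X_zero, AlgHom.id_apply]
  · simp only [AlgHom.comp_apply, shear_X_one, map_add, shear_aeval_X_zero, map_neg,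
      add_neg_cancel_right, AlgHom.id_apply]

end Shear

/-- If `f ∈ K[x,y]` satisfies `f_x = a'(x)·f_y` for some `a ∈ K[x]`, then
`f = g(y + a(x))` for some univariate `g ∈ K[t]`. -/
theorem stmt_7 (K : Type*) [Field K] [CharZero K]
    (f : MvPolynomial (Fin 2) K) (a : Polynomial K)
    (heq : pderiv (0 : Fin 2) f =
      Polynomial.aeval (MvPolynomial.X (0 : Fin 2)) (Polynomial.derivative a)
        * pderiv (1 : Fin 2) f) :
    ∃ g : Polynomial K,
      f = Polynomial.aeval
        (MvPolynomial.X (1 : Fin 2) + Polynomial.aeval (MvPolynomial.X (0 : Fin 2)) a) g := by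
  have h_shear : pderiv 0 (shear (-a) f) = 0 := by
    rw [pderiv_zero_shear, heq, map_mul, shear_aeval_X_zero, Polynomial.derivative_neg, map_neg]
    ring
  obtain ⟨g, hg⟩ :=
    exists_eq_aeval_X_of_vars_subset (vars_subset_one_of_pderiv_zero_eq_zero h_shear)
  refine ⟨g, ?_⟩
  rw [← shear_shear_neg a f, hg, ← Polynomial.aeval_algHom_apply, shear_X_one]
end

section
/- Let K be a field of characteristic zero and f ∈ K[x,y] a polynomial satisfying f · f_y = −f_x. Then f is a constant. -/
/-!
Differentiating lowers the total degree, while over a domain the total degree is additive on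
products. Hence `f` can divide `pderiv i f` only when `pderiv i f = 0`. The equation exhibits
`f` as a divisor of `f_x`, so `f_x = 0`, and then `f * f_y = 0` forces `f_y = 0`. In
characteristic zero a polynomial with vanishing partial derivatives is constant.
-/

open MvPolynomial

namespace MvPolynomial

variable {σ R : Type*} [CommSemiring R]

theorem totalDegree_pderiv_lt_s10 {i : σ} {f : MvPolynomial σ R} (h : pderiv i f ≠ 0) :
    (pderiv i f).totalDegree < f.totalDegree := by
  have hsucc_le : ∀ m ∈ (pderiv i f).support, m.degree + 1 ≤ f.totalDegree := by
    intro m hm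
    rw [mem_support_iff, coeff_pderiv] at hm
    have hmem : m + Finsupp.single i 1 ∈ f.support :=
      mem_support_iff.mpr (left_ne_zero_of_mul hm)
    have hdeg : (m + Finsupp.single i 1).degree ≤ f.totalDegree := le_totalDegree hmem
    rwa [map_add, Finsupp.degree_single] at hdeg
  obtain ⟨m₀, hm₀⟩ := support_nonempty.mpr h
  rw [totalDegree, Finset.sup_lt_iff (by have := hsucc_le m₀ hm₀; rw [Nat.bot_eq_zero]; omega)]
  exact fun m hm => hsucc_le m hm

theorem pderiv_eq_zero_of_dvd [NoZeroDivisors R] {i : σ} {f : MvPolynomial σ R}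
    (h : f ∣ pderiv i f) : pderiv i f = 0 := by
  by_contra hne
  exact (totalDegree_le_of_dvd_of_isDomain h hne).not_gt (totalDegree_pderiv_lt_s10 hne)

theorem eq_C_of_forall_pderiv_eq_zero [IsAddTorsionFree R] {f : MvPolynomial σ R}
    (h : ∀ i, pderiv i f = 0) : f = C (f.coeff 0) := by
  rw [← totalDegree_eq_zero_iff_eq_C, totalDegree_eq_zero_iff]
  intro m hm i
  by_contra hi
  have hpos : 1 ≤ m i := Nat.one_le_iff_ne_zero.mpr hi
  have hle : Finsupp.single i 1 ≤ m := Finsupp.single_le_iff.mpr hpos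
  have hcoeff := coeff_pderiv (i := i) f (m - Finsupp.single i 1)
  rw [h i, coeff_zero, tsub_add_cancel_of_le hle, Finsupp.tsub_apply, Finsupp.single_eq_same,
    ← Nat.cast_add_one, Nat.sub_add_cancel hpos,
    mul_comm, ← nsmul_eq_mul, ← nsmul_zero (m i)] at hcoeff
  exact mem_support_iff.mp hm (IsAddTorsionFree.nsmul_right_injective hi hcoeff.symm)

end MvPolynomial

/-- If `f ∈ K[x,y]` satisfies `f·f_y = −f_x`, then `f` is a constant. -/
theorem stmt_10 (K : Type*) [Field K] [CharZero K]
    (f : MvPolynomial (Fin 2) K)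
    (heq : f * pderiv (1 : Fin 2) f = - pderiv (0 : Fin 2) f) :
    ∃ c : K, f = MvPolynomial.C c := by
  have hx : pderiv 0 f = 0 :=
    pderiv_eq_zero_of_dvd ⟨-pderiv 1 f, by rw [mul_neg, heq, neg_neg]⟩
  have hy : pderiv 1 f = 0 := by
    have hprod : f * pderiv 1 f = 0 := by rw [heq, hx, neg_zero]
    rcases mul_eq_zero.mp hprod with rfl | hy
    · exact map_zero _
    · exact hy
  refine ⟨f.coeff 0, eq_C_of_forall_pderiv_eq_zero fun i => ?_⟩
  fin_cases i
  exacts [hx, hy]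
end

section
/- Let K be an algebraically closed field of characteristic zero and let g ∈ K[t] with g(0) = 0 and deg g ≥ 1. Fix v_1, c_0, a ∈ K nonzero and l_1, l_2, l̃_2 ∈ K, and set b(x) = v_1 c_0 a x^2 + l_1 x + l̃_2. Define H = (u, v, h) by u = g(a y + b(x)), v = v_1 z − a^{−1} b'(x) g(a y + b(x)) − v_1 l_2 x, h = c_0 u^2 + l_2 u. Then the Jacobian matrix JH is nilpotent. -/
open MvPolynomial

lemma aux_nilp {R : Type*} [CommRing R] (A B E G V Q : R) (hEA : E * A = 1) :
    (!![B * G, A * G, 0;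
        -(V * Q) - E * B ^ 2 * G, -(B * G), V;
        Q * (B * G), Q * (A * G), 0]) ^ 3 = 0 := by
  ext i j
  fin_cases i <;> fin_cases j <;>
    simp [pow_succ, Matrix.mul_apply, Fin.sum_univ_three]
  · linear_combination (-(B ^ 3 * G ^ 3)) * hEA
  · linear_combination (-(A * B ^ 2 * G ^ 3)) * hEA
  · ring
  · linear_combination (V * Q * B ^ 2 * G ^ 2 + E * B ^ 4 * G ^ 3) * hEA
  · linear_combination (B ^ 3 * G ^ 3) * hEA
  · linear_combination (-(V * B ^ 2 * G ^ 2)) * hEA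
  · linear_combination (-(Q * B ^ 3 * G ^ 3)) * hEA
  · linear_combination (-(Q * A * B ^ 2 * G ^ 3)) * hEA
  · ring

/-- verification direction of Theorem 2.2. With
`b(x) = v₁c₀a·x² + l₁x + l̃₂`, `u = g(ay + b(x))`,
`v = v₁z − a⁻¹·b'(x)·g(ay+b(x)) − v₁l₂x`, `h = c₀u² + l₂u`, the Jacobian of
`H = (u,v,h)` is nilpotent. -/
theorem stmt_14 (K : Type*) [Field K] [IsAlgClosed K] [CharZero K]
    (g : Polynomial K) (hg0 : g.coeff 0 = 0) (hgdeg : 1 ≤ g.natDegree)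
    (v₁ c₀ a : K) (hv₁ : v₁ ≠ 0) (hc₀ : c₀ ≠ 0) (ha : a ≠ 0)
    (l₁ l₂ l₂' : K)
    (b : MvPolynomial (Fin 3) K)
    (hb : b = MvPolynomial.C (v₁ * c₀ * a) * (MvPolynomial.X 0) ^ 2
      + MvPolynomial.C l₁ * MvPolynomial.X 0 + MvPolynomial.C l₂')
    (u v h : MvPolynomial (Fin 3) K)
    (hu : u = Polynomial.aeval (MvPolynomial.C a * MvPolynomial.X 1 + b) g)
    (hv : v = MvPolynomial.C v₁ * MvPolynomial.X 2
      - MvPolynomial.C a⁻¹ * (pderiv (0 : Fin 3) b) * u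
      - MvPolynomial.C (v₁ * l₂) * MvPolynomial.X 0)
    (hh : h = MvPolynomial.C c₀ * u ^ 2 + MvPolynomial.C l₂ * u) :
    IsNilpotent (Matrix.of fun i j : Fin 3 => pderiv j (![u, v, h] i)) := by
  set w : MvPolynomial (Fin 3) K := MvPolynomial.C a * MvPolynomial.X 1 + b with hw
  set B : MvPolynomial (Fin 3) K := pderiv (0 : Fin 3) b with hB
  set G : MvPolynomial (Fin 3) K := Polynomial.aeval w (Polynomial.derivative g) with hG
  set Q : MvPolynomial (Fin 3) K :=
    2 * MvPolynomial.C c₀ * u + MvPolynomial.C l₂ with hQ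
  have hEA : (MvPolynomial.C a⁻¹ : MvPolynomial (Fin 3) K) * MvPolynomial.C a = 1 := by
    rw [← C_mul, inv_mul_cancel₀ ha, C_1]
  have p2 : ∀ i : Fin 3, pderiv i (2 : MvPolynomial (Fin 3) K) = 0 := fun i => by
    rw [← map_ofNat (MvPolynomial.C : K →+* MvPolynomial (Fin 3) K) 2, pderiv_C]
  -- derivatives of b
  have hb0 : B = 2 * MvPolynomial.C (v₁ * c₀ * a) * MvPolynomial.X 0 + MvPolynomial.C l₁ := by
    rw [hB, hb]
    simp [pderiv_X_self, pderiv_X_of_ne (show (0 : Fin 3) ≠ 1 by decide).symm] <;> ring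
  have hb1 : pderiv (1 : Fin 3) b = 0 := by
    simp [hb, pderiv_X_of_ne (show (0 : Fin 3) ≠ 1 by decide)]
  have hb2 : pderiv (2 : Fin 3) b = 0 := by
    simp [hb, pderiv_X_of_ne (show (0 : Fin 3) ≠ 2 by decide)]
  -- derivatives of w
  have hw0 : pderiv (0 : Fin 3) w = B := by
    simp [hw, hB, pderiv_X_of_ne (show (1 : Fin 3) ≠ 0 by decide)]
  have hw1 : pderiv (1 : Fin 3) w = MvPolynomial.C a := by
    simp [hw, hb1, pderiv_X_self]
  have hw2 : pderiv (2 : Fin 3) w = 0 := by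
    simp [hw, hb2, pderiv_X_of_ne (show (1 : Fin 3) ≠ 2 by decide)]
  -- derivatives of u
  have hu0 : pderiv (0 : Fin 3) u = B * G := by
    rw [hu, Derivation.map_aeval, hw0, smul_eq_mul, ← hG, mul_comm]
  have hu1 : pderiv (1 : Fin 3) u = MvPolynomial.C a * G := by
    rw [hu, Derivation.map_aeval, hw1, smul_eq_mul, ← hG, mul_comm]
  have hu2 : pderiv (2 : Fin 3) u = 0 := by
    rw [hu, Derivation.map_aeval, hw2, smul_zero]
  -- derivatives of B
  have hB0 : pderiv (0 : Fin 3) B = 2 * MvPolynomial.C (v₁ * c₀ * a) := by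
    rw [hb0]
    simp [pderiv_X_self, p2]
  have hB1 : pderiv (1 : Fin 3) B = 0 := by
    rw [hb0]
    simp [pderiv_X_of_ne (show (0 : Fin 3) ≠ 1 by decide), p2]
  have hB2 : pderiv (2 : Fin 3) B = 0 := by
    rw [hb0]
    simp [pderiv_X_of_ne (show (0 : Fin 3) ≠ 2 by decide), p2]
  -- derivatives of v
  have hv0 : pderiv (0 : Fin 3) v
      = -(MvPolynomial.C v₁ * Q) - MvPolynomial.C a⁻¹ * B ^ 2 * G := by
    rw [hv]
    simp only [map_sub, pderiv_C_mul, pderiv_X_self,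
      pderiv_X_of_ne (show (2 : Fin 3) ≠ 0 by decide), pderiv_mul, hB0, hu0, pderiv_C,
      hQ, C_mul]
    linear_combination (-(2 * MvPolynomial.C v₁ * MvPolynomial.C c₀ * u)) * hEA
  have hv1 : pderiv (1 : Fin 3) v = -(B * G) := by
    rw [hv]
    simp only [map_sub, pderiv_C_mul, pderiv_X_of_ne (show (2 : Fin 3) ≠ 1 by decide),
      pderiv_X_of_ne (show (0 : Fin 3) ≠ 1 by decide), pderiv_mul, hB1, hu1, pderiv_C]
    linear_combination (-(B * G)) * hEA
  have hv2 : pderiv (2 : Fin 3) v = MvPolynomial.C v₁ := by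
    rw [hv]
    simp only [map_sub, pderiv_C_mul, pderiv_X_self,
      pderiv_X_of_ne (show (0 : Fin 3) ≠ 2 by decide), pderiv_mul, hB2, hu2, pderiv_C]
    ring
  -- derivatives of h
  have hh0 : pderiv (0 : Fin 3) h = Q * (B * G) := by
    rw [hh]
    simp only [map_add, pderiv_C_mul, pderiv_pow, hu0, hQ]
    push_cast
    ring
  have hh1 : pderiv (1 : Fin 3) h = Q * (MvPolynomial.C a * G) := by
    rw [hh]
    simp only [map_add, pderiv_C_mul, pderiv_pow, hu1, hQ]
    push_cast
    ring
  have hh2 : pderiv (2 : Fin 3) h = 0 := by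
    rw [hh]
    simp only [map_add, pderiv_C_mul, pderiv_pow, hu2, hQ]
    ring
  have hM : (Matrix.of fun i j : Fin 3 => pderiv j (![u, v, h] i))
      = !![B * G, MvPolynomial.C a * G, 0;
           -(MvPolynomial.C v₁ * Q) - MvPolynomial.C a⁻¹ * B ^ 2 * G, -(B * G), MvPolynomial.C v₁;
           Q * (B * G), Q * (MvPolynomial.C a * G), 0] := by
    ext i j
    fin_cases i <;> fin_cases j <;>
      simp [hu0, hu1, hu2, hv0, hv1, hv2, hh0, hh1, hh2]
  exact ⟨3, by rw [hM]; exact aux_nilp _ _ _ _ _ _ hEA⟩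
end
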